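/- arXiv:1406.1499 — 5 statements merged into one kernel-verified Lean document; each statement's English description precedes it below -/
import Mathlib

section
/- The function α(t) = ∫₀¹ exp(-(1-ξ²)t/4) dξ satisfies the ordinary differential equation 4α'(t) + (1 + 2/t)α(t) = 2/t for all t > 0. -/
/-!
Factor `exp (-t/4)` out of the integrand: `α t = exp (-t/4) * I (t/4)` with
`I c = ∫₀¹ exp (c ξ²) dξ`. The substitution `u = √c ξ` gives `√c * I c = ∫₀^√c exp (u²) du`,
and differentiating this identity in `c` yields `2c I'(c) + I(c) = exp c`, which is the
stated equation after the change of variable `c = t/4`.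
-/

open Real

noncomputable def expSqIntegral (c : ℝ) : ℝ := ∫ ξ in (0:ℝ)..1, exp (c * ξ ^ 2)

lemma sqrt_mul_expSqIntegral {c : ℝ} (hc : 0 ≤ c) :
    √c * expSqIntegral c = ∫ u in (0:ℝ)..√c, exp (u ^ 2) := by
  have hsq : ∀ ξ : ℝ, c * ξ ^ 2 = (√c * ξ) ^ 2 := fun ξ => by rw [mul_pow, sq_sqrt hc]
  simp only [expSqIntegral, hsq]
  simpa using intervalIntegral.mul_integral_comp_mul_left (a := 0) (b := 1)
    (f := fun u => exp (u ^ 2)) √c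

lemma hasDerivAt_integral_exp_sq_sqrt {c : ℝ} (hc : 0 < c) :
    HasDerivAt (fun c => ∫ u in (0:ℝ)..√c, exp (u ^ 2)) (exp c / (2 * √c)) c := by
  have hE : HasDerivAt (fun x => ∫ u in (0:ℝ)..x, exp (u ^ 2)) (exp (√c ^ 2)) √c :=
    (continuous_exp.comp (continuous_pow 2)).integral_hasStrictDerivAt 0 √c |>.hasDerivAt
  refine (hE.comp c (hasDerivAt_sqrt hc.ne')).congr_deriv ?_
  rw [sq_sqrt hc.le]
  ring

lemma hasDerivAt_expSqIntegral {c : ℝ} (hc : 0 < c) :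
    HasDerivAt expSqIntegral ((exp c - expSqIntegral c) / (2 * c)) c := by
  have hs : 0 < √c := sqrt_pos.mpr hc
  have hquot : expSqIntegral =ᶠ[nhds c] fun c => (∫ u in (0:ℝ)..√c, exp (u ^ 2)) / √c := by
    filter_upwards [eventually_gt_nhds hc] with x hx
    rw [← sqrt_mul_expSqIntegral hx.le, mul_div_cancel_left₀ _ (sqrt_pos.mpr hx).ne']
  have hderiv := (hasDerivAt_integral_exp_sq_sqrt hc).div (hasDerivAt_sqrt hc.ne') hs.ne'
  refine (hderiv.congr_of_eventuallyEq hquot).congr_deriv ?_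
  rw [← sqrt_mul_expSqIntegral hc.le]
  field_simp
  rw [sq_sqrt hc.le]
  ring

lemma integral_exp_eq_exp_mul_expSqIntegral (t : ℝ) :
    ∫ ξ in (0:ℝ)..1, exp (-(1 - ξ ^ 2) * t / 4) = exp (-t / 4) * expSqIntegral (t / 4) := by
  have hsplit : ∀ ξ : ℝ, exp (-(1 - ξ ^ 2) * t / 4) = exp (-t / 4) * exp (t / 4 * ξ ^ 2) :=
    fun ξ => by rw [← exp_add]; ring_nf
  simp only [hsplit, intervalIntegral.integral_const_mul, expSqIntegral]

/-- `α(t) = ∫₀¹ exp(-(1-ξ²)t/4) dξ` satisfies `4α'(t) + (1 + 2/t)α(t) = 2/t` for `t > 0`. -/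
theorem stmt_2 (α : ℝ → ℝ)
    (hα : ∀ t : ℝ, α t = ∫ ξ in (0:ℝ)..1, Real.exp (-(1 - ξ^2) * t / 4))
    (t : ℝ) (ht : 0 < t) :
    4 * deriv α t + (1 + 2 / t) * α t = 2 / t := by
  have hα' : α = fun t => exp (-t / 4) * expSqIntegral (t / 4) :=
    funext fun t => (hα t).trans (integral_exp_eq_exp_mul_expSqIntegral t)
  have hderiv : HasDerivAt α
      (exp (-t / 4) * (-1 / 4) * expSqIntegral (t / 4) +
        exp (-t / 4) * ((exp (t / 4) - expSqIntegral (t / 4)) / (2 * (t / 4)) * (1 / 4))) t := by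
    rw [hα']
    exact (((hasDerivAt_id t).neg.div_const 4).exp.congr_deriv (by simp)).mul
      ((hasDerivAt_expSqIntegral (by positivity)).comp t ((hasDerivAt_id t).div_const 4))
  rw [hderiv.deriv, hα']
  have hexp : exp (-(t / 4)) * exp (t / 4) = 1 := by rw [← exp_add, neg_add_cancel, exp_zero]
  simp only [neg_div]
  field_simp
  linear_combination 4 * hexp
end

section
/- For real z > 0, the function f_q(z) = ∫₀¹ (1 + (1-ξ²)z/4)^q dξ at q = -3/2 equals 4/(z+4); that is, ∫₀¹ (1 + (1-ξ²)z/4)^{-3/2} dξ = 4/(z+4). -/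
/-! On `[0, t]` the function `x ↦ x / (a √(a - b x²))` is an antiderivative of `(a - b x²)^{-3/2}`;
the theorem is the case `a = 1 + z/4`, `b = z/4`, `t = 1`, where `a - b = 1`. -/

open Real

lemma hasDerivAt_div_mul_sqrt_sub_mul_sq {a b x : ℝ} (ha : a ≠ 0) (hx : 0 < a - b * x ^ 2) :
    HasDerivAt (fun x => x / (a * √(a - b * x ^ 2))) ((a - b * x ^ 2) ^ (-(3:ℝ)/2)) x := by
  have hsqrt : HasDerivAt (fun x => √(a - b * x ^ 2)) (-(b * (2 * x)) / (2 * √(a - b * x ^ 2))) x :=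
    (((hasDerivAt_pow 2 x).const_mul b).const_sub a).sqrt hx.ne' |>.congr_deriv (by push_cast; ring)
  have hs : 0 < √(a - b * x ^ 2) := sqrt_pos.mpr hx
  refine ((hasDerivAt_id x).div (hsqrt.const_mul a) (mul_ne_zero ha hs.ne')).congr_deriv ?_
  have hpow : (a - b * x ^ 2) ^ (-(3:ℝ)/2) = 1 / ((a - b * x ^ 2) * √(a - b * x ^ 2)) := by
    rw [show (-(3:ℝ)/2) = -(1 + 1/2) by norm_num, rpow_neg hx.le, rpow_add hx, rpow_one,
      ← sqrt_eq_rpow, one_div]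
  have hsq : √(a - b * x ^ 2) ^ 2 = a - b * x ^ 2 := sq_sqrt hx.le
  rw [hpow, id]
  field_simp
  linear_combination (-b * x ^ 2) * hsq

lemma integral_sub_mul_sq_rpow_neg_three_halves {a b t : ℝ} (hb : 0 ≤ b) (ht : 0 < a - b * t ^ 2) :
    ∫ x in (0:ℝ)..t, (a - b * x ^ 2) ^ (-(3:ℝ)/2) = t / (a * √(a - b * t ^ 2)) := by
  have hpos : ∀ x ∈ Set.uIcc 0 t, 0 < a - b * x ^ 2 := fun x hx => by
    have : x ^ 2 ≤ t ^ 2 := by rcases Set.mem_uIcc.mp hx with ⟨h0, h1⟩ | ⟨h0, h1⟩ <;> nlinarith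
    nlinarith
  have ha : a ≠ 0 := by nlinarith [sq_nonneg t]
  have hint : IntervalIntegrable (fun x => (a - b * x ^ 2) ^ (-(3:ℝ)/2)) MeasureTheory.volume 0 t :=
    (ContinuousOn.rpow_const (by fun_prop) fun x hx => Or.inl (hpos x hx).ne').intervalIntegrable
  rw [intervalIntegral.integral_eq_sub_of_hasDerivAt
    (fun x hx => hasDerivAt_div_mul_sqrt_sub_mul_sq ha (hpos x hx)) hint]
  simp

/-- For `z > 0`, `∫₀¹ (1 + (1-ξ²)z/4)^{-3/2} dξ = 4/(z+4)`. -/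
theorem stmt_4 (z : ℝ) (hz : 0 < z) :
    ∫ ξ in (0:ℝ)..1, (1 + (1 - ξ^2) * z / 4) ^ (-(3:ℝ)/2) = 4 / (z + 4) := by
  have hform : ∀ ξ : ℝ, 1 + (1 - ξ ^ 2) * z / 4 = (1 + z / 4) - z / 4 * ξ ^ 2 := fun ξ => by ring
  simp_rw [hform]
  rw [integral_sub_mul_sq_rpow_neg_three_halves (by positivity) (by norm_num),
    one_pow, mul_one, add_sub_cancel_right, sqrt_one, mul_one]
  field_simp
  ring
end

section
/- Let A be an algebra over a field of characteristic zero, and let D, Q ∈ A with L = -D² + Q. Define the linear maps ad_D(X) = DX - XD and ad_Q(X) = QX - XQ on A, and suppose X ∈ A satisfies ad_D(X') = ad_Q(X) for some X' ∈ A (i.e. ad_Q(X) lies in the image of ad_D with preimage X'). Then for every k ≥ 0, -4·ad_D(L^{k+1}) = ad_D³(L^k) - 2Q·ad_D(L^k) - 2·ad_D(Q·L^k) + ad_Q(ad_D(L^k)) + ad_D(ad_Q(L^k)) + ad_Q(D·L^k + L^k·D). -/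
/-
Since `L` commutes with `L^k`, the relation `L = -D² + Q` gives `⁅Q, L^k⁆ = ⁅D², L^k⁆`. Expanding
`L^{k+1} = L^k (-D² + Q)`, the difference of the two sides is `-D E + 3 E D` with
`E = ⁅D², L^k⁆ - ⁅Q, L^k⁆`, which therefore vanishes.
-/

section

variable {A : Type*} [Ring A]

theorem lie_eq_lie_sq_of_commute {D Q M : A} (h : Commute (-D ^ 2 + Q) M) :
    ⁅Q, M⁆ = ⁅D ^ 2, M⁆ := by
  have hlie : (-D ^ 2 + Q) * M - M * (-D ^ 2 + Q) = 0 := by rw [h.eq, sub_self]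
  rw [Ring.lie_def, Ring.lie_def, ← sub_eq_zero, ← hlie]
  noncomm_ring

theorem lie_mul_neg_sq_add_sub_eq (D Q M : A) :
    -4 * ⁅D, M * (-D ^ 2 + Q)⁆ -
        (⁅D, ⁅D, ⁅D, M⁆⁆⁆ - 2 * (Q * ⁅D, M⁆) - 2 * ⁅D, Q * M⁆ + ⁅Q, ⁅D, M⁆⁆ + ⁅D, ⁅Q, M⁆⁆
          + ⁅Q, D * M + M * D⁆) =
      -(D * (⁅D ^ 2, M⁆ - ⁅Q, M⁆)) + 3 * ((⁅D ^ 2, M⁆ - ⁅Q, M⁆) * D) := by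
  simp only [Ring.lie_def]
  noncomm_ring

theorem neg_four_lie_mul_neg_sq_add {D Q M : A} (hM : ⁅Q, M⁆ = ⁅D ^ 2, M⁆) :
    -4 * ⁅D, M * (-D ^ 2 + Q)⁆ =
      ⁅D, ⁅D, ⁅D, M⁆⁆⁆ - 2 * (Q * ⁅D, M⁆) - 2 * ⁅D, Q * M⁆ + ⁅Q, ⁅D, M⁆⁆ + ⁅D, ⁅Q, M⁆⁆
        + ⁅Q, D * M + M * D⁆ := by
  rw [← sub_eq_zero, lie_mul_neg_sq_add_sub_eq, hM, sub_self, mul_zero, zero_mul, mul_zero,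
    neg_zero, add_zero]

end

theorem stmt_7_general {A : Type*} [Ring A] (D Q : A) (k : ℕ)
    (L : A) (hL : L = -D^2 + Q)
    (adD adQ : A → A)
    (hadD : ∀ Y, adD Y = D * Y - Y * D)
    (hadQ : ∀ Y, adQ Y = Q * Y - Y * Q) :
    -4 * adD (L ^ (k + 1)) =
      adD (adD (adD (L ^ k))) - 2 * (Q * adD (L ^ k)) - 2 * adD (Q * L ^ k)
        + adQ (adD (L ^ k)) + adD (adQ (L ^ k)) + adQ (D * L ^ k + L ^ k * D) := by
  subst hL
  have hM : ⁅Q, (-D ^ 2 + Q) ^ k⁆ = ⁅D ^ 2, (-D ^ 2 + Q) ^ k⁆ :=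
    lie_eq_lie_sq_of_commute ((Commute.refl _).pow_right k)
  simp only [hadD, hadQ, ← Ring.lie_def, pow_succ _ k]
  exact neg_four_lie_mul_neg_sq_add hM

/-- Algebraic lemma for `L = -D² + Q`: for every `k ≥ 0`,
`-4·ad_D(L^{k+1}) = ad_D³(L^k) - 2Q·ad_D(L^k) - 2·ad_D(Q·L^k)
  + ad_Q(ad_D(L^k)) + ad_D(ad_Q(L^k)) + ad_Q(D·L^k + L^k·D)`. -/
theorem stmt_7 {A : Type*} [Ring A] [Algebra ℚ A] (D Q X X' : A)
    (hX : D * X' - X' * D = Q * X - X * Q) (k : ℕ)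
    (L : A) (hL : L = -D^2 + Q)
    (adD adQ : A → A)
    (hadD : ∀ Y, adD Y = D * Y - Y * D)
    (hadQ : ∀ Y, adQ Y = Q * Y - Y * Q) :
    -4 * adD (L ^ (k + 1)) =
      adD (adD (adD (L ^ k))) - 2 * (Q * adD (L ^ k)) - 2 * adD (Q * L ^ k)
        + adQ (adD (L ^ k)) + adD (adQ (L ^ k)) + adQ (D * L ^ k + L ^ k * D) :=
  stmt_7_general D Q k L hL adD adQ hadD hadQ
end

section
/- Let Q : ℝ → ℝ be smooth and set [a₂] = Q² - Q''/3 and [a₃] = Q³ - (2QQ'' + (Q')²)/2 + Q⁽⁴⁾/10. Then D[a₃] = -(3/10) E [a₂], where E = D³ - 2QD - 2DQ. -/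
/-- With `[a₂] = Q² - Q''/3`, `[a₃] = Q³ - (2QQ'' + (Q')²)/2 + Q⁽⁴⁾/10` and
`E f = f''' - 2Q f' - 2(Qf)'`, one has `D[a₃] = -(3/10) E[a₂]`. -/
theorem stmt_12 (Q : ℝ → ℝ) (hQ : ContDiff ℝ (⊤ : ℕ∞) Q)
    (a₂ a₃ : ℝ → ℝ)
    (ha₂ : ∀ x, a₂ x = (Q x)^2 - deriv^[2] Q x / 3)
    (ha₃ : ∀ x, a₃ x = (Q x)^3
      - (2 * Q x * deriv^[2] Q x + (deriv Q x)^2) / 2 + deriv^[4] Q x / 10)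
    (x : ℝ) :
    deriv a₃ x = -(3/10) * (deriv^[3] a₂ x - 2 * Q x * deriv a₂ x
      - 2 * deriv (fun y => Q y * a₂ y) x) := by
  have hQ' : ContDiff ℝ (⊤ : ℕ∞) Q := hQ.of_le (by simp)
  have hD : ∀ k, Differentiable ℝ (deriv^[k] Q) := fun k =>
    (ContDiff.iterate_deriv k hQ').differentiable (by simp)
  have hder : ∀ (k : ℕ) (y : ℝ), HasDerivAt (deriv^[k] Q) (deriv^[k+1] Q y) y := by
    intro k y
    have := (hD k y).hasDerivAt
    rwa [show deriv^[k+1] Q y = deriv (deriv^[k] Q) y from by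
      rw [Function.iterate_succ_apply']]
  -- derivative of a₂
  have hda₂ : ∀ y, HasDerivAt a₂
      (2 * Q y * deriv^[1] Q y - deriv^[3] Q y / 3) y := by
    intro y
    have h : HasDerivAt (fun z => (Q z)^2 - deriv^[2] Q z / 3)
        (2 * Q y * deriv^[1] Q y - deriv^[3] Q y / 3) y := by
      have h1 := ((hder 0 y).fun_pow 2)
      have h2 := (hder 2 y).div_const 3
      simpa [mul_comm, mul_assoc, mul_left_comm] using h1.fun_sub h2
    exact h.congr_of_eventuallyEq (Filter.Eventually.of_forall fun z => (ha₂ z))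
  have hda₂' : ∀ y, deriv a₂ y = 2 * Q y * deriv^[1] Q y - deriv^[3] Q y / 3 :=
    fun y => (hda₂ y).deriv
  -- second derivative of a₂
  have hd2a₂ : ∀ y, HasDerivAt (deriv a₂)
      (2 * deriv^[1] Q y * deriv^[1] Q y + 2 * Q y * deriv^[2] Q y
        - deriv^[4] Q y / 3) y := by
    intro y
    have h : HasDerivAt (fun z => 2 * Q z * deriv^[1] Q z - deriv^[3] Q z / 3)
        (2 * deriv^[1] Q y * deriv^[1] Q y + 2 * Q y * deriv^[2] Q y
          - deriv^[4] Q y / 3) y := by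
      have h1 := (((hder 0 y).const_mul 2).fun_mul (hder 1 y))
      have h2 := (hder 3 y).div_const 3
      have := h1.fun_sub h2
      exact this.congr_deriv (by simp only [Function.iterate_zero_apply])
    exact h.congr_of_eventuallyEq (Filter.Eventually.of_forall fun z => (hda₂' z))
  have hd2a₂' : ∀ y, deriv^[2] a₂ y
      = 2 * deriv^[1] Q y * deriv^[1] Q y + 2 * Q y * deriv^[2] Q y
        - deriv^[4] Q y / 3 := by
    intro y
    rw [show deriv^[2] a₂ y = deriv (deriv a₂) y from by rw [Function.iterate_succ_apply',
      Function.iterate_one]]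
    exact (hd2a₂ y).deriv
  -- third derivative of a₂
  have hd3a₂ : ∀ y, deriv^[3] a₂ y
      = 6 * deriv^[1] Q y * deriv^[2] Q y + 2 * Q y * deriv^[3] Q y
        - deriv^[5] Q y / 3 := by
    intro y
    have h : HasDerivAt (fun z => 2 * deriv^[1] Q z * deriv^[1] Q z
        + 2 * Q z * deriv^[2] Q z - deriv^[4] Q z / 3)
        (6 * deriv^[1] Q y * deriv^[2] Q y + 2 * Q y * deriv^[3] Q y
          - deriv^[5] Q y / 3) y := by
      have h1 := (((hder 1 y).const_mul 2).fun_mul (hder 1 y))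
      have h2 := (((hder 0 y).const_mul 2).fun_mul (hder 2 y))
      have h3 := (hder 4 y).div_const 3
      have := (h1.fun_add h2).fun_sub h3
      exact this.congr_deriv (by simp only [Function.iterate_zero_apply]; ring)
    have h' := h.congr_of_eventuallyEq
      (Filter.Eventually.of_forall fun z => (hd2a₂' z))
    rw [show deriv^[3] a₂ y = deriv (deriv^[2] a₂) y from by
      rw [Function.iterate_succ_apply']]
    exact h'.deriv
  -- derivative of Q * a₂
  have hdQa₂ : deriv (fun y => Q y * a₂ y) x
      = deriv^[1] Q x * a₂ x + Q x * (2 * Q x * deriv^[1] Q x - deriv^[3] Q x / 3) := by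
    exact ((hder 0 x).mul (hda₂ x)).deriv
  -- derivative of a₃
  have hda₃ : deriv a₃ x = 3 * (Q x)^2 * deriv^[1] Q x
      - (2 * deriv^[1] Q x * deriv^[2] Q x + 2 * Q x * deriv^[3] Q x
        + 2 * deriv^[1] Q x * deriv^[2] Q x) / 2 + deriv^[5] Q x / 10 := by
    have h : HasDerivAt (fun z => (Q z)^3
        - (2 * Q z * deriv^[2] Q z + (deriv Q z)^2) / 2 + deriv^[4] Q z / 10)
        (3 * (Q x)^2 * deriv^[1] Q x
          - (2 * deriv^[1] Q x * deriv^[2] Q x + 2 * Q x * deriv^[3] Q x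
            + 2 * deriv^[1] Q x * deriv^[2] Q x) / 2 + deriv^[5] Q x / 10) x := by
      have h1 := (hder 0 x).fun_pow 3
      have h2 := (((hder 0 x).const_mul 2).fun_mul (hder 2 x))
      have h3 : HasDerivAt (fun z => (deriv Q z)^2)
          (2 * deriv^[1] Q x * deriv^[2] Q x) x := by
        have := (hder 1 x).fun_pow 2
        exact this.congr_deriv (by simp only [Nat.cast_ofNat]; ring)
      have := (h1.fun_sub ((h2.fun_add h3).div_const 2)).fun_add ((hder 4 x).div_const 10)
      exact this.congr_deriv (by simp only [Function.iterate_zero_apply,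
        Function.iterate_one, Nat.cast_ofNat]; rw [Function.iterate_one])
    exact (h.congr_of_eventuallyEq
      (Filter.Eventually.of_forall fun z => (ha₃ z))).deriv
  rw [hda₃, hd3a₂ x, hda₂' x, hdQa₂, ha₂ x]
  ring
end

section
/- With the hypotheses of the analytic continuation of B_q(λ), for every nonnegative integer k, B_k(λ) = (-∂_t)^k [e^{tλ}Ω(t)] evaluated at t = 0; consequently B_k(λ) = ∑_{j=0}^k C(k,j)(-λ)^j A_{k-j}, where A_m = (-∂_t)^m Ω(t)|_{t=0}. -/
open MeasureTheory Set Filter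

lemma aux_pascal (D : ℕ → ℝ) (lam : ℝ) (n : ℕ) :
    lam * ∑ j ∈ Finset.range (n+1), (Nat.choose n j : ℝ) * lam ^ j * D (n-j)
    + ∑ j ∈ Finset.range (n+1), (Nat.choose n j : ℝ) * lam ^ j * D (n+1-j)
    = ∑ j ∈ Finset.range (n+2), (Nat.choose (n+1) j : ℝ) * lam ^ j * D (n+1-j) := by
  rw [Finset.sum_range_succ' (fun j => (Nat.choose (n+1) j : ℝ) * lam ^ j * D (n+1-j)) (n+1)]
  simp only [Nat.succ_sub_succ, Nat.choose_succ_succ, Nat.cast_add, Nat.choose_zero_right,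
    Nat.cast_one, pow_zero, one_mul, Nat.sub_zero, add_mul]
  rw [Finset.sum_add_distrib]
  have h1 : lam * ∑ j ∈ Finset.range (n+1), (Nat.choose n j : ℝ) * lam ^ j * D (n-j)
      = ∑ j ∈ Finset.range (n+1), (Nat.choose n j : ℝ) * lam ^ (j+1) * D (n-j) := by
    rw [Finset.mul_sum]; exact Finset.sum_congr rfl fun j _ => by ring
  have h2 : ∑ j ∈ Finset.range (n+1), (Nat.choose n j : ℝ) * lam ^ j * D (n+1-j)
      = ∑ j ∈ Finset.range n, (Nat.choose n (j+1) : ℝ) * lam ^ (j+1) * D (n-j) + D (n+1) := by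
    rw [Finset.sum_range_succ' (fun j => (Nat.choose n j : ℝ) * lam ^ j * D (n+1-j)) n]
    simp [Nat.succ_sub_succ]
  have h3 : ∑ j ∈ Finset.range (n+1), (Nat.choose n (j+1) : ℝ) * lam ^ (j+1) * D (n-j)
      = ∑ j ∈ Finset.range n, (Nat.choose n (j+1) : ℝ) * lam ^ (j+1) * D (n-j) := by
    rw [Finset.sum_range_succ]
    simp [Nat.choose_succ_self]
  rw [h1, h2, h3]; ring

lemma aux_leibniz (lam : ℝ) (Ω : ℝ → ℝ) (hΩ : ContDiff ℝ (⊤ : ℕ∞) Ω) (n : ℕ) :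
    deriv^[n] (fun s => Real.exp (s * lam) * Ω s)
      = fun s => Real.exp (s * lam) *
        ∑ j ∈ Finset.range (n+1), (Nat.choose n j : ℝ) * lam ^ j * deriv^[n-j] Ω s := by
  have hD : ∀ (m : ℕ) (x : ℝ), HasDerivAt (deriv^[m] Ω) (deriv^[m+1] Ω x) x := by
    intro m x
    rw [Function.iterate_succ_apply']
    exact (((hΩ.iterate_deriv m).differentiable (by simp)) x).hasDerivAt
  induction n with
  | zero => funext s; simp
  | succ n ih =>
    funext s
    rw [Function.iterate_succ_apply', ih]
    have hexp : HasDerivAt (fun t : ℝ => Real.exp (t * lam)) (Real.exp (s * lam) * lam) s := by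
      simpa using ((hasDerivAt_id s).mul_const lam).exp
    have hS : HasDerivAt
        (fun t => ∑ j ∈ Finset.range (n+1), (Nat.choose n j : ℝ) * lam ^ j * deriv^[n-j] Ω t)
        (∑ j ∈ Finset.range (n+1), (Nat.choose n j : ℝ) * lam ^ j * deriv^[n-j+1] Ω s) s :=
      HasDerivAt.fun_sum fun j _ => (hD (n-j) s).const_mul _
    rw [(hexp.fun_mul hS).deriv]
    have hsub : ∀ j ∈ Finset.range (n+1), (Nat.choose n j : ℝ) * lam ^ j * deriv^[n-j+1] Ω s
        = (Nat.choose n j : ℝ) * lam ^ j * deriv^[n+1-j] Ω s := by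
      intro j hj
      rw [Nat.sub_add_comm (Nat.lt_succ_iff.mp (Finset.mem_range.mp hj))]
    rw [Finset.sum_congr rfl hsub, ← aux_pascal (fun m => deriv^[m] Ω s) lam n]
    ring

/-- For nonnegative integer `k`, the continued `B_k(λ)` equals
`(-∂_t)^k[e^{tλ}Ω(t)]|_{t=0}`, and hence
`B_k(λ) = ∑_{j=0}^k C(k,j)(-λ)^j A_{k-j}` with `A_m = (-∂_t)^m Ω|_{t=0}`. -/
theorem stmt_16 (lam : ℝ) (hlam : lam < 0) (Ω : ℝ → ℝ) (hΩ : ContDiff ℝ (⊤ : ℕ∞) Ω)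
    (hdecay : ∀ N n : ℕ, ∃ C : ℝ, ∀ t : ℝ, 1 ≤ t →
      |t ^ N * deriv^[n] (fun s => Real.exp (s * lam) * Ω s) t| ≤ C)
    (k : ℕ) (B : ℝ)
    (hB : B = ((-1 : ℝ) ^ (k + 1) / Real.Gamma (-(k : ℝ) + (k + 1))) *
      ∫ t in Set.Ioi (0:ℝ), t ^ (-(k : ℝ) - 1 + (k + 1)) *
        deriv^[k + 1] (fun s => Real.exp (s * lam) * Ω s) t) :
    B = (-1 : ℝ) ^ k * deriv^[k] (fun s => Real.exp (s * lam) * Ω s) 0 ∧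
    B = ∑ j ∈ Finset.range (k + 1),
      (Nat.choose k j : ℝ) * (-lam) ^ j * ((-1 : ℝ) ^ (k - j) * deriv^[k - j] Ω 0) := by
  set g : ℝ → ℝ := fun s => Real.exp (s * lam) * Ω s with hg_def
  have hΩ' : ContDiff ℝ (⊤ : ℕ∞) Ω := hΩ.of_le (by simp)
  have hg : ContDiff ℝ (⊤ : ℕ∞) g :=
    ((Real.contDiff_exp.of_le le_top).comp (contDiff_id.mul contDiff_const)).mul hΩ'
  have hcont : ∀ m : ℕ, Continuous (deriv^[m] g) := fun m => (hg.iterate_deriv m).continuous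
  have hD : ∀ (m : ℕ) (x : ℝ), HasDerivAt (deriv^[m] g) (deriv^[m+1] g x) x := by
    intro m x
    rw [Function.iterate_succ_apply']
    exact (((hg.iterate_deriv m).differentiable (by simp)) x).hasDerivAt
  -- simplify B
  have hgam : Real.Gamma (-(k : ℝ) + (k + 1)) = 1 := by
    rw [show (-(k : ℝ) + (k + 1)) = 1 by push_cast; ring, Real.Gamma_one]
  have hpow : ∀ t : ℝ, t ^ (-(k : ℝ) - 1 + (k + 1)) = 1 := fun t => by
    rw [show (-(k : ℝ) - 1 + (k + 1)) = 0 by push_cast; ring, Real.rpow_zero]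
  have hB' : B = (-1 : ℝ) ^ (k+1) * ∫ t in Set.Ioi (0:ℝ), deriv^[k+1] g t := by
    rw [hB, hgam]
    simp only [hpow, one_mul, div_one]
  -- integrability of deriv^[k+1] g on Ioi 0
  have hint : IntegrableOn (deriv^[k+1] g) (Set.Ioi (0:ℝ)) := by
    have hsub : Set.Ioi (0:ℝ) ⊆ Set.Ioc 0 1 ∪ Set.Ioi 1 := by
      intro x hx
      rcases le_or_gt x 1 with h | h
      · exact Or.inl ⟨hx, h⟩
      · exact Or.inr h
    refine IntegrableOn.mono_set (IntegrableOn.union ?_ ?_) hsub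
    · exact (hcont (k+1)).integrableOn_Ioc
    · obtain ⟨C, hC⟩ := hdecay 2 (k+1)
      have hbound : Integrable (fun t : ℝ => C * t ^ (-2 : ℝ))
          (volume.restrict (Set.Ioi (1:ℝ))) :=
        (integrableOn_Ioi_rpow_of_lt (by norm_num) one_pos).const_mul C
      refine hbound.mono' ((hcont (k+1)).aestronglyMeasurable) ?_
      refine (ae_restrict_iff' measurableSet_Ioi).2 (ae_of_all _ fun t ht => ?_)
      have ht1 : (1:ℝ) ≤ t := le_of_lt ht
      have ht0 : (0:ℝ) < t := lt_of_lt_of_le one_pos ht1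
      have h2 : t ^ (-2 : ℝ) = (t ^ 2)⁻¹ := by
        rw [show ((-2:ℝ)) = -((2:ℕ) : ℝ) by norm_num, Real.rpow_neg ht0.le, Real.rpow_natCast]
      rw [Real.norm_eq_abs, h2]
      have := hC t ht1
      rw [abs_mul, abs_pow, abs_of_pos ht0] at this
      rw [← le_div_iff₀' (by positivity)] at this
      calc |deriv^[k+1] g t| ≤ C / t ^ 2 := this
        _ = C * (t ^ 2)⁻¹ := by ring
  -- tendsto of deriv^[k] g at atTop
  have htend : Tendsto (deriv^[k] g) atTop (nhds 0) := by
    obtain ⟨C, hC⟩ := hdecay 1 k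
    have hlim : Tendsto (fun t : ℝ => C * t⁻¹) atTop (nhds 0) := by
      simpa using tendsto_inv_atTop_zero.const_mul C
    refine squeeze_zero_norm' ?_ hlim
    filter_upwards [eventually_ge_atTop (1:ℝ)] with t ht1
    have ht0 : (0:ℝ) < t := lt_of_lt_of_le one_pos ht1
    have := hC t ht1
    rw [pow_one, abs_mul, abs_of_pos ht0, ← le_div_iff₀' ht0] at this
    rw [Real.norm_eq_abs]
    calc |deriv^[k] g t| ≤ C / t := this
      _ = C * t⁻¹ := by ring
  have hFTC : ∫ t in Set.Ioi (0:ℝ), deriv^[k+1] g t = 0 - deriv^[k] g 0 :=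
    integral_Ioi_of_hasDerivAt_of_tendsto' (fun x _ => hD k x) hint htend
  have h1 : B = (-1 : ℝ) ^ k * deriv^[k] g 0 := by
    rw [hB', hFTC, pow_succ]; ring
  refine ⟨h1, ?_⟩
  rw [h1, aux_leibniz lam Ω hΩ' k]
  simp only [zero_mul, Real.exp_zero, one_mul]
  rw [Finset.mul_sum]
  refine Finset.sum_congr rfl fun j hj => ?_
  have hjk : j ≤ k := Nat.lt_succ_iff.mp (Finset.mem_range.mp hj)
  have hsplit : (-1 : ℝ) ^ k = (-1) ^ j * (-1) ^ (k - j) := by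
    rw [← pow_add, Nat.add_sub_cancel' hjk]
  rw [hsplit, neg_pow lam j]
  ring
end
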